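/- arXiv:math/0703247 — 5 statements merged into one kernel-verified Lean document; each statement's English description precedes it below -/
import Mathlib

section
/- The operator J𝒜, where J = [[I, 0], [0, -I]], is self-adjoint in the Hilbert space H_{1/2} × H, and consequently 𝒜* = J𝒜J with 𝒟(𝒜*) = J𝒟(𝒜). -/
open scoped InnerProductSpace ComplexConjugate
open Filter

/-- Abstract setup for the second order equation `z̈ + A₀ z + D ż = 0`:
`Hhalf` plays the role of `H_{1/2} = 𝒟(A₀^{1/2})` with the norm `‖A₀^{1/2}·‖`, `H` is the
pivot Hilbert space and `Hm` is the dual `H_{-1/2}`; `ι : H_{1/2} → H` and `j : H → H_{-1/2}`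
are the (dense, injective, continuous) inclusions; the uniformly positive self-adjoint
operator `A₀` induces an isometric isomorphism `A₀ : H_{1/2} → H_{-1/2}`; the damping
operator `D : H_{1/2} → H_{-1/2}` is bounded, and `A₀^{-1/2} D A₀^{-1/2}` is self-adjoint
nonnegative, expressed via the duality pairing
`⟨u, z⟩_{H_{-1/2}×H_{1/2}} = ⟪A₀⁻¹ u, z⟫_{H_{1/2}}`. -/
structure BeamSetup (Hhalf H Hm : Type*)
    [NormedAddCommGroup Hhalf] [InnerProductSpace ℂ Hhalf] [CompleteSpace Hhalf]
    [NormedAddCommGroup H] [InnerProductSpace ℂ H] [CompleteSpace H]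
    [NormedAddCommGroup Hm] [InnerProductSpace ℂ Hm] [CompleteSpace Hm] : Type _ where
  ι : Hhalf →L[ℂ] H
  ι_inj : Function.Injective ι
  ι_dense : DenseRange ι
  j : H →L[ℂ] Hm
  j_inj : Function.Injective j
  A₀ : Hhalf ≃ₗᵢ[ℂ] Hm
  compat : ∀ (y : H) (z : Hhalf), ⟪A₀.symm (j y), z⟫_ℂ = ⟪y, ι z⟫_ℂ
  D : Hhalf →L[ℂ] Hm
  D_symm : ∀ z w : Hhalf, ⟪A₀.symm (D z), w⟫_ℂ = ⟪z, A₀.symm (D w)⟫_ℂ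
  D_nonneg : ∀ z : Hhalf, 0 ≤ (⟪A₀.symm (D z), z⟫_ℂ).re

namespace BeamSetup

variable {Hhalf H Hm : Type*}
    [NormedAddCommGroup Hhalf] [InnerProductSpace ℂ Hhalf] [CompleteSpace Hhalf]
    [NormedAddCommGroup H] [InnerProductSpace ℂ H] [CompleteSpace H]
    [NormedAddCommGroup Hm] [InnerProductSpace ℂ Hm] [CompleteSpace Hm]
    (S : BeamSetup Hhalf H Hm)

/-- `A₀⁻¹ : H_{-1/2} → H_{1/2}` as a continuous linear map. -/
noncomputable def Ai : Hm →L[ℂ] Hhalf :=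
  (S.A₀.symm.toContinuousLinearEquiv : Hm ≃L[ℂ] Hhalf)

/-- `A₀⁻¹ D` as a bounded operator on `H_{1/2}`. -/
noncomputable def T : Hhalf →L[ℂ] Hhalf := S.Ai.comp S.D

/-- `A₀⁻¹ : H → H_{1/2}`. -/
noncomputable def Ainv : H →L[ℂ] Hhalf := S.Ai.comp S.j

/-- `A₀⁻¹` considered as a bounded operator on `H_{1/2}`. -/
noncomputable def AinvR : Hhalf →L[ℂ] Hhalf := S.Ainv.comp S.ι

/-- `A₀⁻¹` considered as a bounded operator on `H`. -/
noncomputable def AinvH : H →L[ℂ] H := S.ι.comp S.Ainv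

/-- `λ` is an eigenvalue of the operator matrix `𝒜 = [[0, I], [-A₀, -D]]` with domain
`𝒟(𝒜) = {(z,w) ∈ H_{1/2} × H_{1/2} : A₀ z + D w ∈ H}`: there is a nonzero
`(z, ι w) ∈ 𝒟(𝒜)` (the domain condition being `j y = A₀ z + D w`, so that
`𝒜 (z, ι w) = (w, -y)`) with `𝒜 (z, ι w) = λ • (z, ι w)`. -/
def IsEigenvalue (lam : ℂ) : Prop :=
  ∃ (z w : Hhalf) (y : H), S.j y = S.A₀ z + S.D w ∧
    ((z, S.ι w) : Hhalf × H) ≠ 0 ∧ w = lam • z ∧ -y = lam • S.ι w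

/-- `λ` belongs to the resolvent set of `𝒜`: there is a bounded operator `R` on
`H_{1/2} × H` mapping onto `𝒟(𝒜)` which inverts `𝒜 - λ` from both sides. -/
def InResolvent (lam : ℂ) : Prop :=
  ∃ R : (Hhalf × H) →L[ℂ] (Hhalf × H),
    (∀ q : Hhalf × H, ∃ (z w : Hhalf) (y : H),
        R q = (z, S.ι w) ∧ S.j y = S.A₀ z + S.D w ∧
        ((w, -y) : Hhalf × H) - lam • ((z, S.ι w) : Hhalf × H) = q) ∧
    (∀ (z w : Hhalf) (y : H), S.j y = S.A₀ z + S.D w →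
        R (((w, -y) : Hhalf × H) - lam • ((z, S.ι w) : Hhalf × H)) = (z, S.ι w))


end BeamSetup

/-- The Hilbert space `H_{1/2} × H` (product with the ℓ²-norm). -/
abbrev BeamSetup.State (Hhalf H : Type*) [NormedAddCommGroup Hhalf] [NormedAddCommGroup H] :=
  WithLp 2 (Hhalf × H)

namespace BeamSetup

variable {Hhalf H Hm : Type*}
    [NormedAddCommGroup Hhalf] [InnerProductSpace ℂ Hhalf] [CompleteSpace Hhalf]
    [NormedAddCommGroup H] [InnerProductSpace ℂ H] [CompleteSpace H]
    [NormedAddCommGroup Hm] [InnerProductSpace ℂ Hm] [CompleteSpace Hm]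
    (S : BeamSetup Hhalf H Hm)

/-- Identification of `H_{1/2} × H` with the underlying product. -/
noncomputable def eqv : State Hhalf H ≃ₗ[ℂ] Hhalf × H := WithLp.linearEquiv 2 ℂ (Hhalf × H)

/-- The domain `𝒟(𝒜) = {(z,w) ∈ H_{1/2} × H_{1/2} : A₀ z + D w ∈ H}` of `𝒜`,
as a submodule of the state space `H_{1/2} × H`. -/
def domA : Submodule ℂ (State Hhalf H) where
  carrier := {p | ∃ (w : Hhalf) (y : H), S.ι w = (eqv p).2 ∧ S.j y = S.A₀ (eqv p).1 + S.D w}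
  zero_mem' := ⟨0, 0, by simp, by simp⟩
  add_mem' := by
    rintro p q ⟨w₁, y₁, hw₁, hy₁⟩ ⟨w₂, y₂, hw₂, hy₂⟩
    exact ⟨w₁ + w₂, y₁ + y₂, by simp [hw₁, hw₂], by simp [hy₁, hy₂]; abel⟩
  smul_mem' := by
    rintro c p ⟨w, y, hw, hy⟩
    exact ⟨c • w, c • y, by simp [hw], by simp [hy]⟩

/-- For `p = (z, ι w) ∈ 𝒟(𝒜)`, the element `w ∈ H_{1/2}`. -/
noncomputable def witw (p : S.domA) : Hhalf := p.2.choose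

/-- For `p = (z, ι w) ∈ 𝒟(𝒜)`, the element `y ∈ H` with `j y = A₀ z + D w`. -/
noncomputable def wity (p : S.domA) : H := p.2.choose_spec.choose

lemma witw_spec (p : S.domA) : S.ι (S.witw p) = (eqv (p : State Hhalf H)).2 :=
  p.2.choose_spec.choose_spec.1

lemma wity_spec (p : S.domA) :
    S.j (S.wity p) = S.A₀ (eqv (p : State Hhalf H)).1 + S.D (S.witw p) :=
  p.2.choose_spec.choose_spec.2

lemma witw_add (p q : S.domA) : S.witw (p + q) = S.witw p + S.witw q := by
  apply S.ι_inj
  simp only [map_add, witw_spec, Submodule.coe_add, Prod.snd_add]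

lemma wity_add (p q : S.domA) : S.wity (p + q) = S.wity p + S.wity q := by
  apply S.j_inj
  simp only [map_add, wity_spec, witw_add, Submodule.coe_add, Prod.fst_add, map_add]
  abel

lemma witw_smul (c : ℂ) (p : S.domA) : S.witw (c • p) = c • S.witw p := by
  apply S.ι_inj
  simp only [map_smul, witw_spec, Submodule.coe_smul, Prod.smul_snd]

lemma wity_smul (c : ℂ) (p : S.domA) : S.wity (c • p) = c • S.wity p := by
  apply S.j_inj
  simp only [map_smul, wity_spec, witw_smul, Submodule.coe_smul, Prod.smul_fst, map_smul,
    smul_add]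

/-- The operator matrix `𝒜 = [[0, I], [-A₀, -D]]` as a partially defined linear operator
on the Hilbert space `H_{1/2} × H`: `𝒜 (z, ι w) = (w, -(A₀ z + D w))`. -/
noncomputable def Aop : State Hhalf H →ₗ.[ℂ] State Hhalf H where
  domain := S.domA
  toFun :=
  { toFun := fun p => eqv.symm (S.witw p, -(S.wity p))
    map_add' := fun p q => by
      simp only [witw_add, wity_add, ← map_add, Prod.mk_add_mk, neg_add]
    map_smul' := fun c p => by
      simp only [witw_smul, wity_smul, RingHom.id_apply, ← map_smul, Prod.smul_mk, smul_neg] }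

/-- The operator `J𝒜`, where `J = [[I, 0], [0, -I]]`:  `J𝒜 (z, ι w) = (w, A₀ z + D w)`. -/
noncomputable def JA : State Hhalf H →ₗ.[ℂ] State Hhalf H where
  domain := S.domA
  toFun :=
  { toFun := fun p => eqv.symm (S.witw p, S.wity p)
    map_add' := fun p q => by
      simp only [witw_add, wity_add, ← map_add, Prod.mk_add_mk]
    map_smul' := fun c p => by
      simp only [witw_smul, wity_smul, RingHom.id_apply, ← map_smul, Prod.smul_mk] }

/-- The domain `J 𝒟(𝒜)` of the operator `J𝒜J`. -/
def domAJ : Submodule ℂ (State Hhalf H) where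
  carrier := {p | ∃ (w : Hhalf) (y : H), S.ι w = -(eqv p).2 ∧ S.j y = S.A₀ (eqv p).1 + S.D w}
  zero_mem' := ⟨0, 0, by simp, by simp⟩
  add_mem' := by
    rintro p q ⟨w₁, y₁, hw₁, hy₁⟩ ⟨w₂, y₂, hw₂, hy₂⟩
    refine ⟨w₁ + w₂, y₁ + y₂, by simp [hw₁, hw₂]; abel, by simp [hy₁, hy₂]; abel⟩
  smul_mem' := by
    rintro c p ⟨w, y, hw, hy⟩
    exact ⟨c • w, c • y, by simp [hw], by simp [hy]⟩

noncomputable def witwJ (p : S.domAJ) : Hhalf := p.2.choose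
noncomputable def wityJ (p : S.domAJ) : H := p.2.choose_spec.choose

lemma witwJ_spec (p : S.domAJ) : S.ι (S.witwJ p) = -(eqv (p : State Hhalf H)).2 :=
  p.2.choose_spec.choose_spec.1

lemma wityJ_spec (p : S.domAJ) :
    S.j (S.wityJ p) = S.A₀ (eqv (p : State Hhalf H)).1 + S.D (S.witwJ p) :=
  p.2.choose_spec.choose_spec.2

lemma witwJ_add (p q : S.domAJ) : S.witwJ (p + q) = S.witwJ p + S.witwJ q := by
  apply S.ι_inj
  simp only [map_add, witwJ_spec, Submodule.coe_add, Prod.snd_add]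
  abel

lemma wityJ_add (p q : S.domAJ) : S.wityJ (p + q) = S.wityJ p + S.wityJ q := by
  apply S.j_inj
  simp only [map_add, wityJ_spec, witwJ_add, Submodule.coe_add, Prod.fst_add, map_add]
  abel

lemma witwJ_smul (c : ℂ) (p : S.domAJ) : S.witwJ (c • p) = c • S.witwJ p := by
  apply S.ι_inj
  simp only [map_smul, witwJ_spec, Submodule.coe_smul, Prod.smul_snd, smul_neg]

lemma wityJ_smul (c : ℂ) (p : S.domAJ) : S.wityJ (c • p) = c • S.wityJ p := by
  apply S.j_inj
  simp only [map_smul, wityJ_spec, witwJ_smul, Submodule.coe_smul, Prod.smul_fst, map_smul,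
    smul_add]

/-- The operator `J𝒜J`, with domain `J 𝒟(𝒜)`:  `J𝒜J (z, -ι w) = (w, A₀ z + D w)`. -/
noncomputable def JAJ : State Hhalf H →ₗ.[ℂ] State Hhalf H where
  domain := S.domAJ
  toFun :=
  { toFun := fun p => eqv.symm (S.witwJ p, S.wityJ p)
    map_add' := fun p q => by
      simp only [witwJ_add, wityJ_add, ← map_add, Prod.mk_add_mk]
    map_smul' := fun c p => by
      simp only [witwJ_smul, wityJ_smul, RingHom.id_apply, ← map_smul, Prod.smul_mk] }

end BeamSetup

open BeamSetup

/-!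
For `(z₁, ι w₁), (z₂, ι w₂) ∈ 𝒟(𝒜)` with `j yᵢ = A₀ zᵢ + D wᵢ`, the compatibility
`⟪A₀⁻¹ j y, z⟫ = ⟪y, ι z⟫` and the symmetry of `A₀⁻¹ D` give Green's identity
`⟪w₁, z₂⟫ + ⟪y₁, ι w₂⟫ = ⟪z₁, w₂⟫ + ⟪ι w₁, y₂⟫`, so `J𝒜` is symmetric and `J𝒜J` is a formal
adjoint of `𝒜`. Conversely, if `⟪J𝒜 p, q⟫ = ⟪p, r⟫` for all `p ∈ 𝒟(𝒜)`, testing against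
`(A₀⁻¹ j y, 0)` gives `q₂ = ι r₁`, and testing against `(-A₀⁻¹ D w, ι w)` gives
`j r₂ = A₀ q₁ + D r₁`; thus `q ∈ 𝒟(𝒜)`, and the adjoint domains are no larger than the formal
ones. The same test elements show `𝒟(𝒜)ᗮ = 0`, so `𝒟(𝒜)` is dense.
-/

namespace LinearPMap

variable {𝕜 E F : Type*} [RCLike 𝕜]
    [NormedAddCommGroup E] [InnerProductSpace 𝕜 E] [CompleteSpace E]
    [NormedAddCommGroup F] [InnerProductSpace 𝕜 F]

theorem adjoint_eq_of_isFormalAdjoint {T : E →ₗ.[𝕜] F} {S : F →ₗ.[𝕜] E}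
    (hT : Dense (T.domain : Set E)) (h : T.IsFormalAdjoint S)
    (hdom : ∀ (y : F) (x₀ : E), (∀ x : T.domain, ⟪T x, y⟫_𝕜 = ⟪(x : E), x₀⟫_𝕜) → y ∈ S.domain) :
    T† = S := by
  have hle : S ≤ T† := h.le_adjoint hT
  refine (eq_of_le_of_domain_eq hle (le_antisymm hle.1 fun y hy => ?_)).symm
  exact hdom y _ fun x => (adjoint_isFormalAdjoint hT).symm x ⟨y, hy⟩

end LinearPMap

namespace BeamSetup

lemma inner_state {Hhalf H : Type*} [NormedAddCommGroup Hhalf] [InnerProductSpace ℂ Hhalf]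
    [NormedAddCommGroup H] [InnerProductSpace ℂ H] (x y : State Hhalf H) :
    ⟪x, y⟫_ℂ = ⟪(eqv x).1, (eqv y).1⟫_ℂ + ⟪(eqv x).2, (eqv y).2⟫_ℂ := rfl

variable {Hhalf H Hm : Type*}
    [NormedAddCommGroup Hhalf] [InnerProductSpace ℂ Hhalf] [CompleteSpace Hhalf]
    [NormedAddCommGroup H] [InnerProductSpace ℂ H] [CompleteSpace H]
    [NormedAddCommGroup Hm] [InnerProductSpace ℂ Hm] [CompleteSpace Hm]
    (S : BeamSetup Hhalf H Hm)

lemma inner_ι_eq (y : H) (z : Hhalf) : ⟪S.ι z, y⟫_ℂ = ⟪z, S.A₀.symm (S.j y)⟫_ℂ := by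
  rw [← inner_conj_symm, ← S.compat, inner_conj_symm]

/-- Green's identity for `J𝒜`: by `compat` and `D_symm` both sides equal
`⟪w₁, z₂⟫ + ⟪z₁, w₂⟫ + ⟪A₀⁻¹ D w₁, w₂⟫`. -/
lemma inner_add_inner_comm {z₁ w₁ : Hhalf} {y₁ : H} (hy₁ : S.j y₁ = S.A₀ z₁ + S.D w₁)
    {z₂ w₂ : Hhalf} {y₂ : H} (hy₂ : S.j y₂ = S.A₀ z₂ + S.D w₂) :
    ⟪w₁, z₂⟫_ℂ + ⟪y₁, S.ι w₂⟫_ℂ = ⟪z₁, w₂⟫_ℂ + ⟪S.ι w₁, y₂⟫_ℂ := by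
  rw [← S.compat, S.inner_ι_eq, hy₁, hy₂, map_add, map_add, inner_add_left, inner_add_right,
    LinearIsometryEquiv.symm_apply_apply, LinearIsometryEquiv.symm_apply_apply, S.D_symm]
  ring

/-- The converse of `inner_add_inner_comm`, obtained by testing against the elements
`(A₀⁻¹ j y, 0)` and `(-A₀⁻¹ D w, ι w)` of `𝒟(𝒜)`. -/
lemma ι_eq_and_j_eq_of_forall_inner {a c : Hhalf} {b d : H}
    (h : ∀ (z w : Hhalf) (y : H), S.j y = S.A₀ z + S.D w →
      ⟪w, a⟫_ℂ + ⟪y, b⟫_ℂ = ⟪z, c⟫_ℂ + ⟪S.ι w, d⟫_ℂ) :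
    S.ι c = b ∧ S.j d = S.A₀ a + S.D c := by
  refine ⟨ext_inner_left ℂ fun y => ?_, ?_⟩
  · have hy := h (S.A₀.symm (S.j y)) 0 y (by simp)
    simp only [inner_zero_left, zero_add, map_zero, add_zero, S.compat] at hy
    exact hy.symm
  · have hA : S.A₀.symm (S.j d) = a + S.A₀.symm (S.D c) := by
      refine ext_inner_left ℂ fun w => ?_
      have hw := h (-S.A₀.symm (S.D w)) w 0 (by simp)
      rw [← S.inner_ι_eq, inner_add_right, ← S.D_symm]
      simp only [inner_zero_left, add_zero, inner_neg_left] at hw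
      linear_combination -hw
    rw [← S.A₀.apply_symm_apply (S.j d), hA, map_add, S.A₀.apply_symm_apply]

lemma mk_mem_domA {z w : Hhalf} {y : H} (h : S.j y = S.A₀ z + S.D w) :
    (eqv.symm (z, S.ι w) : State Hhalf H) ∈ S.domA :=
  ⟨w, y, by simp, by simpa using h⟩

lemma witw_mk {z w : Hhalf} {y : H} (h : S.j y = S.A₀ z + S.D w) :
    S.witw ⟨_, S.mk_mem_domA h⟩ = w :=
  S.ι_inj (by simp [witw_spec])

lemma wity_mk {z w : Hhalf} {y : H} (h : S.j y = S.A₀ z + S.D w) :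
    S.wity ⟨_, S.mk_mem_domA h⟩ = y :=
  S.j_inj (by rw [wity_spec, S.witw_mk h, h]; simp)

lemma domA_dense : Dense (S.domA : Set (State Hhalf H)) := by
  rw [Submodule.dense_iff_topologicalClosure_eq_top, Submodule.topologicalClosure_eq_top_iff,
    Submodule.eq_bot_iff]
  intro q hq
  -- `q ⊥ 𝒟(𝒜)` is the case `a = b = 0` of the converse of Green's identity.
  obtain ⟨hc, hd⟩ := S.ι_eq_and_j_eq_of_forall_inner (a := 0) (b := 0) (c := (eqv q).1)
    (d := (eqv q).2) fun z w y hy => by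
      have hp := hq _ (S.mk_mem_domA hy)
      rw [inner_state] at hp
      simpa only [LinearEquiv.apply_symm_apply, inner_zero_right, add_zero] using hp.symm
  have hc : (eqv q).1 = 0 := S.ι_inj (by simpa using hc)
  have hd : (eqv q).2 = 0 := S.j_inj (by simpa [hc] using hd)
  simpa using congrArg eqv.symm (Prod.ext hc hd : eqv q = 0)

lemma JA_mk {z w : Hhalf} {y : H} (h : S.j y = S.A₀ z + S.D w) :
    S.JA (⟨_, S.mk_mem_domA h⟩ : S.domA) = eqv.symm (w, y) := by
  change eqv.symm (S.witw ⟨_, S.mk_mem_domA h⟩, S.wity ⟨_, S.mk_mem_domA h⟩) = _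
  rw [S.witw_mk h, S.wity_mk h]

lemma Aop_mk {z w : Hhalf} {y : H} (h : S.j y = S.A₀ z + S.D w) :
    S.Aop (⟨_, S.mk_mem_domA h⟩ : S.domA) = eqv.symm (w, -y) := by
  change eqv.symm (S.witw ⟨_, S.mk_mem_domA h⟩, -S.wity ⟨_, S.mk_mem_domA h⟩) = _
  rw [S.witw_mk h, S.wity_mk h]

lemma JA_isFormalAdjoint : S.JA.IsFormalAdjoint S.JA := fun (p q : S.domA) => by
  change ⟪(eqv.symm (S.witw p, S.wity p) : State Hhalf H), q⟫_ℂ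
    = ⟪(p : State Hhalf H), eqv.symm (S.witw q, S.wity q)⟫_ℂ
  rw [inner_state, inner_state, LinearEquiv.apply_symm_apply, LinearEquiv.apply_symm_apply,
    ← S.witw_spec p, ← S.witw_spec q]
  exact S.inner_add_inner_comm (S.wity_spec p) (S.wity_spec q)

lemma Aop_isFormalAdjoint_JAJ : S.Aop.IsFormalAdjoint S.JAJ :=
    fun (p : S.domA) (q : S.domAJ) => by
  change ⟪(eqv.symm (S.witw p, -S.wity p) : State Hhalf H), q⟫_ℂ
    = ⟪(p : State Hhalf H), eqv.symm (S.witwJ q, S.wityJ q)⟫_ℂ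
  have hq : (eqv (q : State Hhalf H)).2 = -S.ι (S.witwJ q) := by rw [S.witwJ_spec, neg_neg]
  rw [inner_state, inner_state, LinearEquiv.apply_symm_apply, LinearEquiv.apply_symm_apply,
    ← S.witw_spec p, hq, inner_neg_left, inner_neg_right, neg_neg]
  exact S.inner_add_inner_comm (S.wity_spec p) (S.wityJ_spec q)

lemma mem_domA_of_forall_inner {q r : State Hhalf H}
    (h : ∀ p : S.domA, ⟪S.JA p, q⟫_ℂ = ⟪(p : State Hhalf H), r⟫_ℂ) : q ∈ S.domA := by
  refine ⟨(eqv r).1, (eqv r).2, S.ι_eq_and_j_eq_of_forall_inner fun z w y hy => ?_⟩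
  have hp := h ⟨_, S.mk_mem_domA hy⟩
  rw [S.JA_mk hy, inner_state, inner_state] at hp
  simpa only [LinearEquiv.apply_symm_apply] using hp

lemma mem_domAJ_of_forall_inner {q r : State Hhalf H}
    (h : ∀ p : S.domA, ⟪S.Aop p, q⟫_ℂ = ⟪(p : State Hhalf H), r⟫_ℂ) : q ∈ S.domAJ := by
  refine ⟨(eqv r).1, (eqv r).2, S.ι_eq_and_j_eq_of_forall_inner fun z w y hy => ?_⟩
  have hp := h ⟨_, S.mk_mem_domA hy⟩
  rw [S.Aop_mk hy, inner_state, inner_state] at hp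
  simpa only [LinearEquiv.apply_symm_apply, inner_neg_left, inner_neg_right] using hp

end BeamSetup

/-- The operator `J𝒜`, where `J = [[I, 0], [0, -I]]`, is self-adjoint in the
Hilbert space `H_{1/2} × H`, and consequently `𝒜* = J𝒜J` with `𝒟(𝒜*) = J𝒟(𝒜)`
(the equality of `LinearPMap`s includes the equality of the domains). -/
theorem statement1 {Hhalf H Hm : Type*}
    [NormedAddCommGroup Hhalf] [InnerProductSpace ℂ Hhalf] [CompleteSpace Hhalf]
    [NormedAddCommGroup H] [InnerProductSpace ℂ H] [CompleteSpace H]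
    [NormedAddCommGroup Hm] [InnerProductSpace ℂ Hm] [CompleteSpace Hm]
    (S : BeamSetup Hhalf H Hm) :
    _root_.IsSelfAdjoint S.JA ∧ S.Aop.adjoint = S.JAJ :=
  ⟨LinearPMap.adjoint_eq_of_isFormalAdjoint S.domA_dense S.JA_isFormalAdjoint
      fun _ _ => S.mem_domA_of_forall_inner,
    LinearPMap.adjoint_eq_of_isFormalAdjoint S.domA_dense S.Aop_isFormalAdjoint_JAJ
      fun _ _ => S.mem_domAJ_of_forall_inner⟩
end

section
/- A complex number λ belongs to the resolvent set of 𝒜 if and only if the bounded operator I + λA₀⁻¹(D + λI) on H_{1/2} is boundedly invertible. -/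
/-! For `(z, w) ∈ 𝒟(𝒜)` with `A₀ z + D w = y ∈ H`, the equation `(𝒜 - λ)(z, w) = (f, g)` reads
`w - λ z = f`, `-y - λ w = g`. Applying `A₀⁻¹` to the second equation expresses `z` through `w`
and `g`, and substituting into the first leaves `(I + λ A₀⁻¹ (D + λ I)) w = f - λ A₀⁻¹ g`.
Hence `𝒜 - λ` is boundedly invertible exactly when this pencil is. -/

open scoped InnerProductSpace ComplexConjugate
open Filter

open BeamSetup

namespace BeamSetup

variable {Hhalf H Hm : Type*}
    [NormedAddCommGroup Hhalf] [InnerProductSpace ℂ Hhalf] [CompleteSpace Hhalf]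
    [NormedAddCommGroup H] [InnerProductSpace ℂ H] [CompleteSpace H]
    [NormedAddCommGroup Hm] [InnerProductSpace ℂ Hm] [CompleteSpace Hm]
    (S : BeamSetup Hhalf H Hm)

noncomputable def pencil (lam : ℂ) : Hhalf →L[ℂ] Hhalf := 1 + lam • (S.T + lam • S.AinvR)

/-- The first component of the solution of `(𝒜 - λ)(z, w) = (f, g)`, in terms of `w` and `g`. -/
noncomputable def solFst (lam : ℂ) (w : Hhalf) (g : H) : Hhalf :=
  -(S.T w + lam • S.AinvR w) - S.Ainv g

lemma j_eq_A₀_add_D_iff (y : H) (z w : Hhalf) :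
    S.j y = S.A₀ z + S.D w ↔ S.Ainv y = z + S.T w := by
  change _ ↔ S.A₀.symm (S.j y) = z + S.A₀.symm (S.D w)
  rw [← S.A₀.symm_apply_apply z, ← map_add, S.A₀.symm.injective.eq_iff, S.A₀.apply_symm_apply]

lemma pencil_apply (lam : ℂ) (w : Hhalf) :
    S.pencil lam w = w + lam • (S.T w + lam • S.AinvR w) := rfl

lemma Ainv_ι (w : Hhalf) : S.Ainv (S.ι w) = S.AinvR w := rfl

variable {S}

section Domain

variable {lam : ℂ} {z w : Hhalf} {y : H}

lemma pencil_apply_of_domain (hdom : S.j y = S.A₀ z + S.D w) :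
    S.pencil lam w = (w - lam • z) - lam • S.Ainv (-y - lam • S.ι w) := by
  rw [map_sub, map_neg, map_smul, Ainv_ι, (S.j_eq_A₀_add_D_iff y z w).1 hdom, pencil_apply]
  module

lemma eq_solFst_of_domain (hdom : S.j y = S.A₀ z + S.D w) :
    z = S.solFst lam w (-y - lam • S.ι w) := by
  rw [solFst, map_sub, map_neg, map_smul, Ainv_ι, (S.j_eq_A₀_add_D_iff y z w).1 hdom]
  module

end Domain

variable (S)

lemma j_eq_A₀_solFst_add_D (lam : ℂ) (w : Hhalf) (g : H) :
    S.j (-g - lam • S.ι w) = S.A₀ (S.solFst lam w g) + S.D w := by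
  rw [j_eq_A₀_add_D_iff, solFst, map_sub, map_neg, map_smul, Ainv_ι]
  module

lemma sub_smul_solFst (lam : ℂ) (w : Hhalf) (g : H) :
    ((w, -(-g - lam • S.ι w)) : Hhalf × H) - lam • ((S.solFst lam w g, S.ι w) : Hhalf × H)
      = (S.pencil lam w + lam • S.Ainv g, g) := by
  ext
  · simp only [Prod.fst_sub, Prod.smul_fst, solFst, pencil_apply]
    module
  · simp only [Prod.snd_sub, Prod.smul_snd]
    abel

lemma pencil_bijective_of_inResolvent {lam : ℂ} (h : S.InResolvent lam) :
    Function.Bijective (S.pencil lam) := by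
  obtain ⟨R, hsurj, hinv⟩ := h
  refine ⟨(injective_iff_map_eq_zero _).2 fun w hw => S.ι_inj ?_, fun f => ?_⟩
  · -- `(𝒜 - λ)` maps the domain element built from `w` and `g = 0` to `0`, so `R 0 = 0` kills it.
    have hR := hinv _ w _ (S.j_eq_A₀_solFst_add_D lam w 0)
    rw [sub_smul_solFst, hw, map_zero, smul_zero, add_zero, Prod.mk_zero_zero, map_zero] at hR
    rw [map_zero]
    exact (congrArg Prod.snd hR).symm
  · obtain ⟨z, w, y, -, hdom, hq⟩ := hsurj (f, 0)
    have hf : w - lam • z = f := congrArg Prod.fst hq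
    have hg : -y - lam • S.ι w = 0 := congrArg Prod.snd hq
    exact ⟨w, by rw [pencil_apply_of_domain hdom, hf, hg, map_zero, smul_zero, sub_zero]⟩

/-- The resolvent of `𝒜` at `λ` built from an inverse `K` of the pencil:
`w = K (f - λ A₀⁻¹ g)` and `z = solFst λ w g`. -/
noncomputable def resolventOfInverse (lam : ℂ) (K : Hhalf →L[ℂ] Hhalf) :
    (Hhalf × H) →L[ℂ] (Hhalf × H) :=
  let W := K.comp (ContinuousLinearMap.fst ℂ Hhalf H
    - lam • S.Ainv.comp (ContinuousLinearMap.snd ℂ Hhalf H))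
  (-((S.T + lam • S.AinvR).comp W) - S.Ainv.comp (ContinuousLinearMap.snd ℂ Hhalf H)).prod
    (S.ι.comp W)

lemma resolventOfInverse_apply (lam : ℂ) (K : Hhalf →L[ℂ] Hhalf) (q : Hhalf × H) :
    S.resolventOfInverse lam K q =
      (S.solFst lam (K (q.1 - lam • S.Ainv q.2)) q.2, S.ι (K (q.1 - lam • S.Ainv q.2))) := by
  rfl

lemma inResolvent_of_isUnit_pencil {lam : ℂ} (h : IsUnit (S.pencil lam)) :
    S.InResolvent lam := by
  obtain ⟨u, hu⟩ := h
  have hright (x : Hhalf) : S.pencil lam (u.inv x) = x := by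
    rw [← hu]
    exact DFunLike.congr_fun u.val_inv x
  have hleft (x : Hhalf) : u.inv (S.pencil lam x) = x := by
    rw [← hu]
    exact DFunLike.congr_fun u.inv_val x
  refine ⟨S.resolventOfInverse lam u.inv, fun q => ?_, fun z w y hdom => ?_⟩
  · set w := u.inv (q.1 - lam • S.Ainv q.2)
    refine ⟨_, w, _, S.resolventOfInverse_apply lam _ q, S.j_eq_A₀_solFst_add_D lam w q.2, ?_⟩
    rw [sub_smul_solFst, hright, sub_add_cancel]
  · rw [resolventOfInverse_apply, Prod.fst_sub, Prod.snd_sub, Prod.smul_fst, Prod.smul_snd,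
      ← pencil_apply_of_domain hdom, hleft, ← eq_solFst_of_domain hdom]

end BeamSetup

/-- `λ` belongs to the resolvent set of `𝒜` if and only if the bounded
operator `I + λ A₀⁻¹ (D + λ I)` on `H_{1/2}` is boundedly invertible. -/
theorem statement4 {Hhalf H Hm : Type*}
    [NormedAddCommGroup Hhalf] [InnerProductSpace ℂ Hhalf] [CompleteSpace Hhalf]
    [NormedAddCommGroup H] [InnerProductSpace ℂ H] [CompleteSpace H]
    [NormedAddCommGroup Hm] [InnerProductSpace ℂ Hm] [CompleteSpace Hm]
    (S : BeamSetup Hhalf H Hm) (lam : ℂ) :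
    S.InResolvent lam ↔
      IsUnit ((1 : Hhalf →L[ℂ] Hhalf) + lam • (S.T + lam • S.AinvR)) :=
  ⟨fun h => ContinuousLinearMap.isUnit_iff_bijective.2 (S.pencil_bijective_of_inResolvent h),
    S.inResolvent_of_isUnit_pencil⟩
end

section
/- Every eigenvalue λ of 𝒜 satisfies |λ| ≥ (1/(2‖A₀⁻¹‖)) · (√(‖A₀⁻¹D‖² + 4‖A₀⁻¹‖) − ‖A₀⁻¹D‖), where ‖A₀⁻¹D‖ is the operator norm on H_{1/2} and ‖A₀⁻¹‖ the operator norm on H. -/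
open scoped InnerProductSpace ComplexConjugate
open Filter

open BeamSetup

/-! The eigenvalue equation `𝒜 (z, w) = λ (z, w)` reads `w = λ z`, `A₀ z + D w = -λ² z`;
applying `A₀⁻¹` turns it into the quadratic pencil `z + λ T z + λ² A z = 0` with `T = A₀⁻¹ D`
and `A = A₀⁻¹` on `H_{1/2}`. For `z ≠ 0` the triangle inequality gives
`1 ≤ |λ| ‖T‖ + |λ|² ‖A‖`, so `|λ|` is at least the positive root of `a r² + t r - 1`. -/

theorem one_le_of_quadratic_pencil_eq_zero {𝕜 E : Type*} [NontriviallyNormedField 𝕜]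
    [SeminormedAddCommGroup E] [NormedSpace 𝕜 E] (T A : E →L[𝕜] E) {lam : 𝕜} {z : E} (hz : ‖z‖ ≠ 0)
    (hpencil : z + lam • T z + lam ^ 2 • A z = 0) :
    1 ≤ ‖lam‖ * ‖T‖ + ‖lam‖ ^ 2 * ‖A‖ := by
  have hz_eq : z = -(lam • T z + lam ^ 2 • A z) := by
    linear_combination (norm := module) hpencil
  have hbound : ‖z‖ ≤ (‖lam‖ * ‖T‖ + ‖lam‖ ^ 2 * ‖A‖) * ‖z‖ :=
    calc ‖z‖ = ‖lam • T z + lam ^ 2 • A z‖ := by rw [hz_eq, norm_neg, ← hz_eq]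
      _ ≤ ‖lam‖ * (‖T‖ * ‖z‖) + ‖lam‖ ^ 2 * (‖A‖ * ‖z‖) := by
        refine (norm_add_le _ _).trans ?_
        rw [norm_smul, norm_smul, norm_pow]
        gcongr
        exacts [T.le_opNorm z, A.le_opNorm z]
      _ = (‖lam‖ * ‖T‖ + ‖lam‖ ^ 2 * ‖A‖) * ‖z‖ := by ring
  exact le_of_mul_le_mul_right (by simpa using hbound) ((norm_nonneg z).lt_of_ne' hz)

theorem div_mul_sqrt_sub_le_of_one_le {a t r : ℝ} (ha : 0 ≤ a) (ht : 0 ≤ t) (hr : 0 ≤ r)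
    (h : 1 ≤ r * t + r ^ 2 * a) :
    1 / (2 * a) * (Real.sqrt (t ^ 2 + 4 * a) - t) ≤ r := by
  rcases ha.eq_or_lt with rfl | ha
  · -- the left side is `0` by the convention `1 / 0 = 0`
    simpa using hr
  have hsqrt : Real.sqrt (t ^ 2 + 4 * a) ≤ 2 * a * r + t :=
    Real.sqrt_le_iff.mpr ⟨by positivity, by nlinarith⟩
  rw [one_div_mul_eq_div, div_le_iff₀ (by positivity)]
  linarith

namespace BeamSetup

variable {Hhalf H Hm : Type*}
    [NormedAddCommGroup Hhalf] [InnerProductSpace ℂ Hhalf] [CompleteSpace Hhalf]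
    [NormedAddCommGroup H] [InnerProductSpace ℂ H] [CompleteSpace H]
    [NormedAddCommGroup Hm] [InnerProductSpace ℂ Hm] [CompleteSpace Hm]
    (S : BeamSetup Hhalf H Hm)

@[simp]
theorem Ai_A₀ (u : Hhalf) : S.Ai (S.A₀ u) = u := by
  simp [Ai]

theorem IsEigenvalue.exists_pencil_eq_zero {S : BeamSetup Hhalf H Hm} {lam : ℂ}
    (h : S.IsEigenvalue lam) : ∃ z ≠ 0, z + lam • S.T z + lam ^ 2 • S.AinvR z = 0 := by
  obtain ⟨z, w, y, hdom, hne, hw, hy⟩ := h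
  subst hw
  refine ⟨z, fun hz => hne (by simp [hz]), ?_⟩
  have hy' : y = -(lam ^ 2 • S.ι z) := by
    rw [← neg_neg y, hy, map_smul, smul_smul, sq]
  have hAi := congrArg S.Ai hdom
  simp only [hy', map_neg, map_smul, map_add, Ai_A₀] at hAi
  change -(lam ^ 2 • S.AinvR z) = z + lam • S.T z at hAi
  linear_combination (norm := module) -hAi

end BeamSetup

/-- Every eigenvalue `λ` of `𝒜` satisfies
`|λ| ≥ (1/(2‖A₀⁻¹‖)) (√(‖A₀⁻¹D‖² + 4‖A₀⁻¹‖) − ‖A₀⁻¹D‖)`, where `‖A₀⁻¹D‖` is the operator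
norm on `H_{1/2}` and `‖A₀⁻¹‖` the operator norm on `H` (using that
`‖A₀⁻¹‖_{ℒ(H_{1/2})} = ‖A₀⁻¹‖_{ℒ(H)}`). -/
theorem statement6 {Hhalf H Hm : Type*}
    [NormedAddCommGroup Hhalf] [InnerProductSpace ℂ Hhalf] [CompleteSpace Hhalf]
    [NormedAddCommGroup H] [InnerProductSpace ℂ H] [CompleteSpace H]
    [NormedAddCommGroup Hm] [InnerProductSpace ℂ Hm] [CompleteSpace Hm]
    (S : BeamSetup Hhalf H Hm) (hnorm : ‖S.AinvR‖ = ‖S.AinvH‖) (lam : ℂ)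
    (h : S.IsEigenvalue lam) :
    (1 / (2 * ‖S.AinvH‖)) * (Real.sqrt (‖S.T‖ ^ 2 + 4 * ‖S.AinvH‖) - ‖S.T‖)
      ≤ ‖lam‖ := by
  obtain ⟨z, hz, hpencil⟩ := h.exists_pencil_eq_zero
  have hone := one_le_of_quadratic_pencil_eq_zero S.T S.AinvR (norm_ne_zero_iff.mpr hz) hpencil
  rw [hnorm] at hone
  exact div_mul_sqrt_sub_le_of_one_le (norm_nonneg _) (norm_nonneg _) (norm_nonneg _) hone
end

section
/- Let A₀⁻¹ be compact and suppose there exists δ > 0 such that ⟨A₀⁻¹Df, f⟩²_{H_{1/2}} − 4⟨A₀⁻¹f, f⟩_{H_{1/2}} > δ for all f ∈ H_{1/2} with ‖f‖_{H_{1/2}} = 1. Then every eigenvalue of 𝒜 is real (and negative). -/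
open scoped InnerProductSpace ComplexConjugate
open Filter

open BeamSetup

set_option maxHeartbeats 1000000 in
/-- Let `A₀⁻¹` be compact and suppose there exists `δ > 0` such that
`⟨A₀⁻¹D f, f⟩²_{H_{1/2}} − 4 ⟨A₀⁻¹ f, f⟩_{H_{1/2}} > δ` for all `f ∈ H_{1/2}` with
`‖f‖_{H_{1/2}} = 1` (the pencil `L(s) = s² I + s A₀⁻¹D + A₀⁻¹` is strongly hyperbolic).
Then every eigenvalue of `𝒜` is real and negative. -/
theorem statement16 {Hhalf H Hm : Type*}
    [NormedAddCommGroup Hhalf] [InnerProductSpace ℂ Hhalf] [CompleteSpace Hhalf]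
    [NormedAddCommGroup H] [InnerProductSpace ℂ H] [CompleteSpace H]
    [NormedAddCommGroup Hm] [InnerProductSpace ℂ Hm] [CompleteSpace Hm]
    (S : BeamSetup Hhalf H Hm) (hcpt : IsCompactOperator ⇑S.AinvH)
    (δ : ℝ) (hδ : 0 < δ)
    (hyp : ∀ f : Hhalf, ‖f‖ = 1 →
      δ < ((⟪S.T f, f⟫_ℂ).re) ^ 2 - 4 * (⟪S.AinvR f, f⟫_ℂ).re)
    (lam : ℂ) (h : S.IsEigenvalue lam) :
    lam.im = 0 ∧ lam.re < 0 := by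
  obtain ⟨z, w, y, hjy, hne, hw, hy⟩ := h
  have hz : z ≠ 0 := by
    intro h0
    apply hne
    subst h0
    simp at hw
    simp [hw]
  have hAinvR : S.AinvR z = S.A₀.symm (S.j (S.ι z)) := rfl
  have hT : S.T z = S.A₀.symm (S.D z) := rfl
  have hy2 : y = -(lam ^ 2 • S.ι z) := by
    have h1 : -y = lam • S.ι w := hy
    rw [hw, map_smul, smul_smul, ← sq] at h1
    linear_combination (norm := module) -h1
  have key : -(lam ^ 2 • S.AinvR z) = z + lam • S.T z := by
    rw [hy2, map_neg, map_smul] at hjy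
    have h2 := congrArg S.A₀.symm hjy
    simp only [map_neg, map_smul, map_add, LinearIsometryEquiv.symm_apply_apply, hw,
      map_smul] at h2
    rw [hAinvR, hT]
    exact h2
  have ha : ⟪S.AinvR z, z⟫_ℂ = ((‖S.ι z‖ ^ 2 : ℝ) : ℂ) := by
    rw [hAinvR, S.compat (S.ι z) z, inner_self_eq_norm_sq_to_K]
    norm_cast
  have h3 : (starRingEnd ℂ) ⟪S.T z, z⟫_ℂ = ⟪S.T z, z⟫_ℂ := by
    calc (starRingEnd ℂ) ⟪S.T z, z⟫_ℂ = ⟪z, S.T z⟫_ℂ := inner_conj_symm _ _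
      _ = ⟪z, S.A₀.symm (S.D z)⟫_ℂ := by rw [hT]
      _ = ⟪S.A₀.symm (S.D z), z⟫_ℂ := (S.D_symm z z).symm
      _ = ⟪S.T z, z⟫_ℂ := by rw [hT]
  have hbr : (⟪S.T z, z⟫_ℂ).im = 0 := Complex.conj_eq_iff_im.1 h3
  have hb : ⟪S.T z, z⟫_ℂ = (((⟪S.T z, z⟫_ℂ).re : ℝ) : ℂ) :=
    Complex.ext rfl (by simp [hbr])
  have hc : ⟪z, z⟫_ℂ = ((‖z‖ ^ 2 : ℝ) : ℂ) := by
    rw [inner_self_eq_norm_sq_to_K]; norm_cast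
  have hι : S.ι z ≠ 0 := by
    intro h0
    exact hz (S.ι_inj (by simp [h0]))
  have hA : (0 : ℝ) < ‖S.ι z‖ ^ 2 := pow_pos (norm_pos_iff.2 hι) 2
  have hC : (0 : ℝ) < ‖z‖ ^ 2 := pow_pos (norm_pos_iff.2 hz) 2
  have hB0 : (0 : ℝ) ≤ (⟪S.T z, z⟫_ℂ).re := by
    have := S.D_nonneg z
    rw [← hT] at this
    exact this
  set A : ℝ := ‖S.ι z‖ ^ 2 with hA_def
  set B : ℝ := (⟪S.T z, z⟫_ℂ).re with hB_def
  set C : ℝ := ‖z‖ ^ 2 with hC_def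
  clear_value A B C
  have eq1 : (starRingEnd ℂ lam) ^ 2 * (A : ℂ) + (starRingEnd ℂ lam) * (B : ℂ) + (C : ℂ) = 0 := by
    have e := congrArg (fun v => ⟪v, z⟫_ℂ) key
    simp only [inner_neg_left, inner_smul_left, inner_add_left, ha, hb, hc, map_pow] at e
    linear_combination -e
  set x : ℝ := lam.re with hx_def
  set yv : ℝ := -lam.im with hyv_def
  clear_value x yv
  have hre : (x ^ 2 - yv ^ 2) * A + x * B + C = 0 := by
    have := congrArg Complex.re eq1
    simp [Complex.add_re, Complex.mul_re, Complex.mul_im, pow_two] at this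
    rw [hx_def, hyv_def]
    linear_combination this
  have him : (2 * x * A + B) * yv = 0 := by
    have := congrArg Complex.im eq1
    simp [Complex.add_im, Complex.mul_re, Complex.mul_im, pow_two] at this
    rw [hx_def, hyv_def]
    linear_combination this
  -- hyperbolicity: discriminant bound
  have hdisc : δ * C ^ 2 < B ^ 2 - 4 * A * C := by
    set f : Hhalf := ((‖z‖⁻¹ : ℝ) : ℂ) • z with hf_def
    have hnr : ‖((‖z‖⁻¹ : ℝ) : ℂ)‖ = ‖z‖⁻¹ := by
      simp [abs_of_nonneg (inv_nonneg.2 (norm_nonneg z))]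
    have hfn : ‖f‖ = 1 := by
      rw [hf_def, norm_smul, hnr, inv_mul_cancel₀ (norm_ne_zero_iff.2 hz)]
    have h4 := hyp f hfn
    have hTf : (⟪S.T f, f⟫_ℂ).re = (‖z‖⁻¹) ^ 2 * B := by
      rw [hf_def, map_smul, inner_smul_left, inner_smul_right, Complex.conj_ofReal, hb,
        ← Complex.ofReal_mul, ← Complex.ofReal_mul, Complex.ofReal_re]
      ring
    have hAf : (⟪S.AinvR f, f⟫_ℂ).re = (‖z‖⁻¹) ^ 2 * A := by
      rw [hf_def, map_smul, inner_smul_left, inner_smul_right, Complex.conj_ofReal, ha,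
        ← Complex.ofReal_mul, ← Complex.ofReal_mul, Complex.ofReal_re]
      ring
    rw [hTf, hAf] at h4
    have hinv : (‖z‖⁻¹) ^ 2 = C⁻¹ := by rw [hC_def, ← inv_pow]
    rw [hinv] at h4
    have h5 : δ * C ^ 2 < ((C⁻¹ * B) ^ 2 - 4 * (C⁻¹ * A)) * C ^ 2 :=
      mul_lt_mul_of_pos_right h4 (pow_pos hC 2)
    have hCne : C ≠ 0 := ne_of_gt hC
    calc δ * C ^ 2 < ((C⁻¹ * B) ^ 2 - 4 * (C⁻¹ * A)) * C ^ 2 := h5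
      _ = B ^ 2 - 4 * A * C := by field_simp
  have hBsq : 4 * A * C < B ^ 2 := by nlinarith [mul_pos hC hC]
  -- imaginary part vanishes
  have hyv : yv = 0 := by
    by_contra hy0
    have hfac : 2 * x * A + B = 0 := by
      rcases mul_eq_zero.1 him with h' | h'
      · exact h'
      · exact absurd h' hy0
    have hy2' : (0 : ℝ) < yv ^ 2 := by positivity
    have e1 : x * B = -(2 * x ^ 2 * A) := by linear_combination x * hfac
    have e2 : B ^ 2 = 4 * x ^ 2 * A ^ 2 := by linear_combination (B - 2 * x * A) * hfac
    have e3 : C = x ^ 2 * A + yv ^ 2 * A := by linear_combination hre - e1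
    have e4 : 4 * A * C = 4 * x ^ 2 * A ^ 2 + 4 * yv ^ 2 * A ^ 2 := by
      linear_combination (4 * A) * e3
    nlinarith [e2, e4, hBsq, mul_pos (mul_pos hA hA) hy2']
  have him0 : lam.im = 0 := by
    have h6 := hyv
    rw [hyv_def] at h6
    linarith
  refine ⟨him0, ?_⟩
  have hre' : x ^ 2 * A + x * B + C = 0 := by
    rw [hyv] at hre
    linear_combination hre
  by_contra hx0
  push_neg at hx0
  have hx0' : (0 : ℝ) ≤ x := hx0
  nlinarith [mul_nonneg hx0' hB0, mul_nonneg (mul_nonneg hx0' hx0') hA.le, hC]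
end

section
/- If (x_n, y_n) ∈ 𝒟(𝒜) with ‖(x_n,y_n)‖² = 1 and (𝒜 − λ)(x_n, y_n) → 0 for a real λ, then ‖y_n − λx_n‖_{H_{1/2}} → 0 and the indefinite inner products satisfy [(x_n,y_n),(x_n,y_n)] = ⟨x_n,x_n⟩_{H_{1/2}} − λ²⟨x_n,x_n⟩_H + o(1) as n → ∞. -/
open scoped InnerProductSpace ComplexConjugate
open Filter

open BeamSetup

/-!
The first component of `(𝒜 − λ)(xₙ, ι wₙ)` is `wₙ − λ xₙ`, so it tends to zero in `H_{1/2}`,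
and so does its image `ι wₙ − λ ι xₙ` in `H`. The normalisation bounds `ι wₙ` and `λ ι xₙ`,
and `|‖a‖² − ‖b‖²| ≤ ‖a − b‖ (‖a‖ + ‖b‖)` then gives `‖ι wₙ‖² − λ² ‖ι xₙ‖² → 0`.
-/

theorem abs_norm_sq_sub_norm_sq_le {E : Type*} [SeminormedAddCommGroup E] (a b : E) :
    |‖a‖ ^ 2 - ‖b‖ ^ 2| ≤ ‖a - b‖ * (‖a‖ + ‖b‖) := by
  rw [sq_sub_sq, abs_mul, abs_of_nonneg (by positivity), mul_comm]
  exact mul_le_mul_of_nonneg_right (abs_norm_sub_norm_le a b) (by positivity)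

theorem tendsto_norm_sq_sub_norm_sq_zero {ι E : Type*} [SeminormedAddCommGroup E]
    {l : Filter ι} {a b : ι → E} {A B : ℝ} (ha : ∀ i, ‖a i‖ ≤ A) (hb : ∀ i, ‖b i‖ ≤ B)
    (h : Tendsto (fun i => a i - b i) l (nhds 0)) :
    Tendsto (fun i => ‖a i‖ ^ 2 - ‖b i‖ ^ 2) l (nhds 0) := by
  have hsmall : Tendsto (fun i => ‖a i - b i‖ * (A + B)) l (nhds 0) := by
    simpa using (tendsto_zero_iff_norm_tendsto_zero.mp h).mul_const (A + B)
  refine squeeze_zero_norm (fun i => ?_) hsmall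
  calc ‖‖a i‖ ^ 2 - ‖b i‖ ^ 2‖ ≤ ‖a i - b i‖ * (‖a i‖ + ‖b i‖) :=
        abs_norm_sq_sub_norm_sq_le (a i) (b i)
    _ ≤ ‖a i - b i‖ * (A + B) := by gcongr; exacts [ha i, hb i]

theorem le_one_of_sq_add_sq_eq_one {a b : ℝ} (hb : 0 ≤ b) (h : a ^ 2 + b ^ 2 = 1) :
    b ≤ 1 :=
  (pow_le_one_iff_of_nonneg hb two_ne_zero).mp (by nlinarith [sq_nonneg a])

open Filter in
theorem statement18_general {Hhalf H Hm : Type*}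
    [NormedAddCommGroup Hhalf] [InnerProductSpace ℂ Hhalf] [CompleteSpace Hhalf]
    [NormedAddCommGroup H] [InnerProductSpace ℂ H] [CompleteSpace H]
    [NormedAddCommGroup Hm] [InnerProductSpace ℂ Hm] [CompleteSpace Hm]
    (S : BeamSetup Hhalf H Hm) (lam : ℝ) (x w : ℕ → Hhalf) (u : ℕ → H)
    (hnorm : ∀ n, ‖x n‖ ^ 2 + ‖S.ι (w n)‖ ^ 2 = 1)
    (hconv : Tendsto
      (fun n => ((w n - (lam : ℂ) • x n, -(u n) - (lam : ℂ) • S.ι (w n)) : Hhalf × H))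
      atTop (nhds 0)) :
    Tendsto (fun n => ‖w n - (lam : ℂ) • x n‖) atTop (nhds 0) ∧
    Tendsto (fun n => (‖x n‖ ^ 2 - ‖S.ι (w n)‖ ^ 2)
        - (‖x n‖ ^ 2 - lam ^ 2 * ‖S.ι (x n)‖ ^ 2)) atTop (nhds (0 : ℝ)) := by
  have hfst : Tendsto (fun n => w n - (lam : ℂ) • x n) atTop (nhds 0) := by
    simpa using hconv.fst_nhds
  refine ⟨tendsto_zero_iff_norm_tendsto_zero.mp hfst, ?_⟩
  have hι : Tendsto (fun n => S.ι (w n) - (lam : ℂ) • S.ι (x n)) atTop (nhds 0) := by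
    simpa [Function.comp_def] using (S.ι.continuous.tendsto 0).comp hfst
  have hw : ∀ n, ‖S.ι (w n)‖ ≤ 1 := fun n =>
    le_one_of_sq_add_sq_eq_one (norm_nonneg _) (hnorm n)
  have hx : ∀ n, ‖(lam : ℂ) • S.ι (x n)‖ ≤ |lam| * ‖S.ι‖ := fun n => by
    have hx1 : ‖x n‖ ≤ 1 :=
      le_one_of_sq_add_sq_eq_one (norm_nonneg _) ((add_comm _ _).trans (hnorm n))
    rw [norm_smul, Complex.norm_real, Real.norm_eq_abs]
    gcongr
    exact (S.ι.le_of_opNorm_le_of_le le_rfl hx1).trans_eq (mul_one _)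
  convert (tendsto_norm_sq_sub_norm_sq_zero hw hx hι).neg using 2 with n
  · rw [norm_smul, Complex.norm_real, Real.norm_eq_abs, mul_pow, sq_abs]
    ring
  · simp

open Filter in
/-- If `(xₙ, ι wₙ) ∈ 𝒟(𝒜)` with `‖(xₙ, ι wₙ)‖² = 1` and
`(𝒜 − λ)(xₙ, ι wₙ) → 0` for a real `λ` (here `𝒜 (xₙ, ι wₙ) = (wₙ, -uₙ)` with
`j uₙ = A₀ xₙ + D wₙ`), then `‖wₙ − λ xₙ‖_{H_{1/2}} → 0` and the indefinite inner products
satisfy `[(xₙ,yₙ),(xₙ,yₙ)] = ⟨xₙ,xₙ⟩_{H_{1/2}} − λ² ⟨xₙ,xₙ⟩_H + o(1)` as `n → ∞`, where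
`[(x,y),(x,y)] = ‖x‖²_{H_{1/2}} − ‖y‖²_H`. -/
theorem statement18 {Hhalf H Hm : Type*}
    [NormedAddCommGroup Hhalf] [InnerProductSpace ℂ Hhalf] [CompleteSpace Hhalf]
    [NormedAddCommGroup H] [InnerProductSpace ℂ H] [CompleteSpace H]
    [NormedAddCommGroup Hm] [InnerProductSpace ℂ Hm] [CompleteSpace Hm]
    (S : BeamSetup Hhalf H Hm) (lam : ℝ) (x w : ℕ → Hhalf) (u : ℕ → H)
    (hdom : ∀ n, S.j (u n) = S.A₀ (x n) + S.D (w n))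
    (hnorm : ∀ n, ‖x n‖ ^ 2 + ‖S.ι (w n)‖ ^ 2 = 1)
    (hconv : Tendsto
      (fun n => ((w n - (lam : ℂ) • x n, -(u n) - (lam : ℂ) • S.ι (w n)) : Hhalf × H))
      atTop (nhds 0)) :
    Tendsto (fun n => ‖w n - (lam : ℂ) • x n‖) atTop (nhds 0) ∧
    Tendsto (fun n => (‖x n‖ ^ 2 - ‖S.ι (w n)‖ ^ 2)
        - (‖x n‖ ^ 2 - lam ^ 2 * ‖S.ι (x n)‖ ^ 2)) atTop (nhds (0 : ℝ)) :=
  statement18_general S lam x w u hnorm hconv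
end
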